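/- arXiv:1010.4627 — 2 statements merged into one kernel-verified Lean document; each statement's English description precedes it below -/
import Mathlib

section
/- Assume V ∈ RH_q with q > n/2 and let W^ℒ be the heat semigroup generated by −ℒ = Δ − V, with kernel satisfying |∂_t W^ℒ_t(x,y)| ≤ C t^{-1-n/2} e^{-c|x-y|²/t} (1 + t/γ(x)²)^{-1} (1 + |x-y|/√t)^{-1-n}. Then for f ∈ BMO^ℒ(ℝⁿ) and any x with t ≥ γ(x_k)² where γ(x) ∼ γ(x_k), the long-time derivative integral Ω(f)(x) = ∫_{γ(x_k)²}^∞ ∫_{ℝⁿ} |∂_t W^ℒ_t(x,y)| |f(y)| dy dt satisfies Ω(f)(x) ≤ C ‖f‖_{BMO^ℒ(ℝⁿ)}. -/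
/-!
For `t > γ(x_k)²` the factor `(1 + t/γ(x)²)⁻¹ ≤ γ(x)²/t` supplies the extra decay in time.
In space, cover `ℝⁿ` by the balls `B(x, 2^{j+1}√t)`: their radii exceed `γ(x)`, so the `BMO^ℒ`
condition bounds `∫_B |f|` by `‖f‖ |B|`, and the Gaussian factor beats the doubling of `|B|`, so
`∫ e^{-c|x-y|²/t} |f(y)| dy ≲ ‖f‖ t^{n/2}`. The inner integral is therefore `≲ ‖f‖ γ(x)² t⁻²`,
and integrating over `t > γ(x_k)²` gives `≲ ‖f‖ γ(x)²/γ(x_k)² ≲ ‖f‖`.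
-/

open MeasureTheory Set
open scoped ENNReal

noncomputable section

/-- The average of `f` over a set `s` (with respect to Lebesgue measure). -/
def avgOn {n : ℕ} (f : EuclideanSpace ℝ (Fin n) → ℝ) (s : Set (EuclideanSpace ℝ (Fin n))) : ℝ :=
  ((volume s).toReal)⁻¹ * ∫ y in s, f y

/-- `f ∈ BMO^ℒ(ℝⁿ)` with norm at most `M`, relative to the critical radius function `γ`:
the mean oscillation of `f` over every ball is `≤ M`, and the mean of `|f|` over every
ball of radius `r ≥ γ(center)` is `≤ M`. -/
def IsBMOLWith {n : ℕ} (γ : EuclideanSpace ℝ (Fin n) → ℝ)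
    (f : EuclideanSpace ℝ (Fin n) → ℝ) (M : ℝ) : Prop :=
  (∀ (z : EuclideanSpace ℝ (Fin n)) (r : ℝ), 0 < r →
    ((volume (Metric.ball z r)).toReal)⁻¹ *
      ∫ y in Metric.ball z r, |f y - avgOn f (Metric.ball z r)| ≤ M) ∧
  (∀ (z : EuclideanSpace ℝ (Fin n)) (r : ℝ), γ z ≤ r →
    ((volume (Metric.ball z r)).toReal)⁻¹ * ∫ y in Metric.ball z r, |f y| ≤ M)

open Real Metric Filter Module

/-- On `B(x, 2^{j+1} r)`, at the points where `4^j ≤ 1 + (|x-y|/r)²`, the Gaussian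
`e^{-c(|x-y|/r)²}` is at most `e^{c(1-4^j)}`; `(2^{j+1})^d` is the volume ratio of that ball
to `B(x, r)`. -/
def gaussianDyadicSum (d : ℕ) (c : ℝ) : ℝ :=
  ∑' j : ℕ, exp (c * (1 - 4 ^ j)) * ((2 : ℝ) ^ (j + 1)) ^ d

theorem exists_four_pow_le_one_add_sq_lt_two_pow (s : ℝ) :
    ∃ j : ℕ, (4 : ℝ) ^ j ≤ 1 + s ^ 2 ∧ s < 2 ^ (j + 1) := by
  obtain ⟨j, hle, hlt⟩ :=
    exists_nat_pow_near (le_add_of_nonneg_right (sq_nonneg s)) (by norm_num : (1 : ℝ) < 4)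
  refine ⟨j, hle, lt_of_pow_lt_pow_left₀ 2 (by positivity) ?_⟩
  rw [← pow_mul, mul_comm, pow_mul]
  norm_num
  linarith

theorem summable_exp_mul_one_sub_four_pow_mul_two_pow (d : ℕ) {c : ℝ} (hc : 0 < c) :
    Summable fun j : ℕ => exp (c * (1 - 4 ^ j)) * ((2 : ℝ) ^ (j + 1)) ^ d := by
  refine summable_of_ratio_norm_eventually_le (by norm_num : (1 / 2 : ℝ) < 1) ?_
  have hgrowth : Tendsto (fun j : ℕ => exp (3 * c * 4 ^ j)) atTop atTop :=
    tendsto_exp_atTop.comp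
      ((tendsto_pow_atTop_atTop_of_one_lt (by norm_num)).const_mul_atTop (by positivity))
  filter_upwards [hgrowth.eventually_ge_atTop (2 * 2 ^ d)] with j hj
  have hstep : exp (c * (1 - 4 ^ (j + 1))) = exp (c * (1 - 4 ^ j)) / exp (3 * c * 4 ^ j) := by
    rw [← exp_sub]; ring_nf
  rw [Real.norm_of_nonneg (by positivity), Real.norm_of_nonneg (by positivity), hstep,
    pow_succ 2 (j + 1), mul_pow, div_mul_eq_mul_div, div_le_iff₀ (exp_pos _)]
  calc exp (c * (1 - 4 ^ j)) * (((2 : ℝ) ^ (j + 1)) ^ d * 2 ^ d)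
      = exp (c * (1 - 4 ^ j)) * ((2 : ℝ) ^ (j + 1)) ^ d * 2 ^ d := by ring
    _ ≤ exp (c * (1 - 4 ^ j)) * ((2 : ℝ) ^ (j + 1)) ^ d * (exp (3 * c * 4 ^ j) / 2) := by
      gcongr; linarith
    _ = _ := by ring

theorem gaussianDyadicSum_pos (d : ℕ) {c : ℝ} (hc : 0 < c) : 0 < gaussianDyadicSum d c :=
  (summable_exp_mul_one_sub_four_pow_mul_two_pow d hc).tsum_pos (fun _ => by positivity) 0
    (by positivity)

theorem ofReal_exp_neg_mul_sq_mul_le_tsum_indicator {E : Type*} [NormedAddCommGroup E]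
    (g : E → ℝ≥0∞) {c r : ℝ} (hc : 0 ≤ c) (hr : 0 < r) (x y : E) :
    ENNReal.ofReal (exp (-c * (‖x - y‖ / r) ^ 2)) * g y ≤
      ∑' j : ℕ, (ball x (2 ^ (j + 1) * r)).indicator
        (fun z => ENNReal.ofReal (exp (c * (1 - 4 ^ j))) * g z) y := by
  obtain ⟨j, hj4, hj2⟩ := exists_four_pow_le_one_add_sq_lt_two_pow (‖x - y‖ / r)
  have hy : y ∈ ball x (2 ^ (j + 1) * r) := by
    rw [mem_ball, dist_comm, dist_eq_norm]
    exact (div_lt_iff₀ hr).1 hj2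
  refine le_trans ?_ (ENNReal.le_tsum j)
  rw [indicator_of_mem hy]
  gcongr ENNReal.ofReal (exp ?_) * _
  nlinarith

section Gaussian

variable {E : Type*} [NormedAddCommGroup E] [NormedSpace ℝ E] [FiniteDimensional ℝ E]
  [MeasurableSpace E] [BorelSpace E] (μ : Measure E) [μ.IsAddHaarMeasure]

theorem lintegral_exp_neg_mul_sq_mul_le {g : E → ℝ≥0∞} (hg : AEMeasurable g μ) {c r : ℝ}
    (hc : 0 < c) (hr : 0 < r) {x : E} {M : ℝ≥0∞}
    (hball : ∀ ρ, 2 * r ≤ ρ → ∫⁻ y in ball x ρ, g y ∂μ ≤ M * μ (ball x ρ)) :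
    ∫⁻ y, ENNReal.ofReal (exp (-c * (‖x - y‖ / r) ^ 2)) * g y ∂μ ≤
      ENNReal.ofReal (gaussianDyadicSum (finrank ℝ E) c) * M * μ (ball x r) := by
  set w : ℕ → ℝ := fun j => exp (c * (1 - 4 ^ j))
  have hvol : ∀ j : ℕ, μ (ball x (2 ^ (j + 1) * r)) =
      ENNReal.ofReal (((2 : ℝ) ^ (j + 1)) ^ finrank ℝ E) * μ (ball x r) := fun j => by
    rw [Measure.addHaar_ball_mul_of_pos μ x (by positivity), Measure.addHaar_ball_center μ x r]
  calc ∫⁻ y, ENNReal.ofReal (exp (-c * (‖x - y‖ / r) ^ 2)) * g y ∂μ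
      ≤ ∫⁻ y, ∑' j : ℕ, (ball x (2 ^ (j + 1) * r)).indicator
          (fun z => ENNReal.ofReal (w j) * g z) y ∂μ :=
        lintegral_mono fun y => ofReal_exp_neg_mul_sq_mul_le_tsum_indicator g hc.le hr x y
    _ = ∑' j : ℕ, ENNReal.ofReal (w j) * ∫⁻ y in ball x (2 ^ (j + 1) * r), g y ∂μ := by
        rw [lintegral_tsum fun j => (hg.const_mul _).indicator measurableSet_ball]
        congr 1 with j
        rw [lintegral_indicator measurableSet_ball, lintegral_const_mul' _ _ ENNReal.ofReal_ne_top]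
    _ ≤ ∑' j : ℕ, ENNReal.ofReal (w j) *
          (M * (ENNReal.ofReal (((2 : ℝ) ^ (j + 1)) ^ finrank ℝ E) * μ (ball x r))) := by
        gcongr with j
        rw [← hvol]
        refine hball _ (mul_le_mul_of_nonneg_right ?_ hr.le)
        calc (2 : ℝ) = 2 ^ 1 := (pow_one 2).symm
          _ ≤ 2 ^ (j + 1) := pow_le_pow_right₀ one_le_two (by omega)
    _ = ENNReal.ofReal (gaussianDyadicSum (finrank ℝ E) c) * M * μ (ball x r) := by
        rw [gaussianDyadicSum, ENNReal.ofReal_tsum_of_nonneg (fun j => by positivity)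
          (summable_exp_mul_one_sub_four_pow_mul_two_pow _ hc), ← ENNReal.tsum_mul_right,
          ← ENNReal.tsum_mul_right]
        congr 1 with j
        rw [ENNReal.ofReal_mul (by positivity)]
        ring

end Gaussian

theorem IsBMOLWith.setLIntegral_abs_le {n : ℕ} {γ f : EuclideanSpace ℝ (Fin n) → ℝ} {M : ℝ}
    (hBMO : IsBMOLWith γ f M) (hf : LocallyIntegrable f volume) {z : EuclideanSpace ℝ (Fin n)}
    {ρ : ℝ} (hρ : γ z ≤ ρ) :
    ∫⁻ y in ball z ρ, ENNReal.ofReal |f y| ≤ ENNReal.ofReal M * volume (ball z ρ) := by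
  have hfin : volume (ball z ρ) ≠ ∞ := measure_ball_lt_top.ne
  rcases (ENNReal.toReal_nonneg (a := volume (ball z ρ))).eq_or_lt with hzero | hpos
  · have hnull : volume (ball z ρ) = 0 :=
      ((ENNReal.toReal_eq_zero_iff _).1 hzero.symm).resolve_right hfin
    rw [setLIntegral_measure_zero _ _ hnull]
    exact zero_le
  have hint : IntegrableOn f (ball z ρ) volume :=
    (hf.integrableOn_isCompact (isCompact_closedBall z ρ)).mono_set ball_subset_closedBall
  rw [← ofReal_integral_eq_lintegral_ofReal hint.abs (ae_of_all _ fun y => abs_nonneg _),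
    ← ENNReal.ofReal_toReal hfin, ← ENNReal.ofReal_mul' ENNReal.toReal_nonneg]
  exact ENNReal.ofReal_le_ofReal
    (((inv_mul_le_iff₀ hpos).1 (hBMO.2 z ρ hρ)).trans_eq (mul_comm _ _))

theorem rpow_neg_one_sub_natCast_div_two {t : ℝ} (ht : 0 < t) (n : ℕ) :
    t ^ (-1 - (n : ℝ) / 2) = t⁻¹ * (√t ^ n)⁻¹ := by
  rw [sub_eq_add_neg, rpow_add ht, rpow_neg_one, rpow_neg ht.le, sqrt_eq_rpow, ← rpow_natCast,
    ← rpow_mul ht.le]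
  ring_nf

/-- The assumed bound on `|∂ₜ W^ℒ_t(x,y)|`, with `γ = γ(x)` and `d = |x - y|`. -/
def heatKernelDerivBound (n : ℕ) (C₀ c₀ γ t d : ℝ) : ℝ :=
  C₀ * t ^ (-1 - (n : ℝ) / 2) * exp (-c₀ * d ^ 2 / t) * (1 + t / γ ^ 2)⁻¹ *
    (1 + d / √t) ^ (-1 - (n : ℝ))

theorem heatKernelDerivBound_le {n : ℕ} {C₀ c₀ γ t d : ℝ} (hC₀ : 0 ≤ C₀) (hγ : 0 < γ)
    (ht : 0 < t) (hd : 0 ≤ d) :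
    heatKernelDerivBound n C₀ c₀ γ t d ≤
      C₀ * γ ^ 2 / t ^ 2 * (√t ^ n)⁻¹ * exp (-c₀ * (d / √t) ^ 2) := by
  have hspatial : (1 + d / √t) ^ (-1 - (n : ℝ)) ≤ 1 :=
    rpow_le_one_of_one_le_of_nonpos (le_add_of_nonneg_right (by positivity))
      (by linarith [(n.cast_nonneg : (0 : ℝ) ≤ n)])
  have htemporal : (1 + t / γ ^ 2)⁻¹ ≤ γ ^ 2 / t := by
    rw [← inv_div t]
    exact inv_anti₀ (div_pos ht (pow_pos hγ 2)) (le_add_of_nonneg_left zero_le_one)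
  rw [heatKernelDerivBound, div_pow, sq_sqrt ht.le, rpow_neg_one_sub_natCast_div_two ht,
    ← mul_div_assoc]
  calc C₀ * (t⁻¹ * (√t ^ n)⁻¹) * exp (-c₀ * d ^ 2 / t) * (1 + t / γ ^ 2)⁻¹ *
        (1 + d / √t) ^ (-1 - (n : ℝ))
      ≤ C₀ * (t⁻¹ * (√t ^ n)⁻¹) * exp (-c₀ * d ^ 2 / t) * (γ ^ 2 / t) * 1 := by
        gcongr
    _ = C₀ * γ ^ 2 / t ^ 2 * (√t ^ n)⁻¹ * exp (-c₀ * d ^ 2 / t) := by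
        field_simp

theorem IsBMOLWith.lintegral_abs_mul_abs_le {n : ℕ}
    {γ f k : EuclideanSpace ℝ (Fin n) → ℝ} {M C₀ c₀ t : ℝ} {x : EuclideanSpace ℝ (Fin n)}
    (hBMO : IsBMOLWith γ f M) (hf : LocallyIntegrable f volume) (hC₀ : 0 ≤ C₀) (hc₀ : 0 < c₀)
    (hγx : 0 < γ x) (ht : 0 < t) (hγt : γ x ≤ 2 * √t)
    (hk : ∀ y, |k y| ≤ heatKernelDerivBound n C₀ c₀ (γ x) t ‖x - y‖) :
    ∫⁻ y, ENNReal.ofReal (|k y| * |f y|) ≤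
      ENNReal.ofReal (γ x ^ 2 * (C₀ * gaussianDyadicSum n c₀ *
        (volume (ball (0 : EuclideanSpace ℝ (Fin n)) 1)).toReal * M) / t ^ 2) := by
  set κ := (volume (ball (0 : EuclideanSpace ℝ (Fin n)) 1)).toReal
  set P := C₀ * γ x ^ 2 / t ^ 2 * (√t ^ n)⁻¹ with hP_def
  have hP : 0 ≤ P := by positivity
  have hvol : volume (ball x √t) = ENNReal.ofReal (√t ^ n) * ENNReal.ofReal κ := by
    rw [Measure.addHaar_ball_of_pos volume x (sqrt_pos.2 ht), finrank_euclideanSpace_fin,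
      ENNReal.ofReal_toReal measure_ball_lt_top.ne]
  have hgauss := lintegral_exp_neg_mul_sq_mul_le volume
    hf.aestronglyMeasurable.aemeasurable.abs.ennreal_ofReal hc₀ (sqrt_pos.2 ht)
    fun ρ hρ => hBMO.setLIntegral_abs_le hf (hγt.trans hρ)
  rw [finrank_euclideanSpace_fin, hvol] at hgauss
  calc ∫⁻ y, ENNReal.ofReal (|k y| * |f y|)
      ≤ ∫⁻ y, ENNReal.ofReal P *
          (ENNReal.ofReal (exp (-c₀ * (‖x - y‖ / √t) ^ 2)) * ENNReal.ofReal |f y|) := by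
        refine lintegral_mono fun y => ?_
        rw [← ENNReal.ofReal_mul (by positivity), ← ENNReal.ofReal_mul hP, ← mul_assoc]
        exact ENNReal.ofReal_le_ofReal (mul_le_mul_of_nonneg_right
          ((hk y).trans (heatKernelDerivBound_le hC₀ hγx ht (norm_nonneg _))) (abs_nonneg _))
    _ = ENNReal.ofReal P * ∫⁻ y, ENNReal.ofReal (exp (-c₀ * (‖x - y‖ / √t) ^ 2)) *
          ENNReal.ofReal |f y| :=
        lintegral_const_mul' _ _ ENNReal.ofReal_ne_top
    _ ≤ ENNReal.ofReal P * (ENNReal.ofReal (gaussianDyadicSum n c₀) * ENNReal.ofReal M *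
          (ENNReal.ofReal (√t ^ n) * ENNReal.ofReal κ)) := by
        gcongr
    _ = ENNReal.ofReal (P * (gaussianDyadicSum n c₀ * M * (√t ^ n * κ))) := by
        rw [ENNReal.ofReal_mul (p := P) hP, ENNReal.ofReal_mul' (q := √t ^ n * κ) (by positivity),
          ENNReal.ofReal_mul (p := gaussianDyadicSum n c₀) (gaussianDyadicSum_pos n hc₀).le,
          ENNReal.ofReal_mul (p := √t ^ n) (by positivity)]
    _ = ENNReal.ofReal (γ x ^ 2 * (C₀ * gaussianDyadicSum n c₀ * κ * M) / t ^ 2) := by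
        have hsqrt : √t ^ n ≠ 0 := pow_ne_zero _ (sqrt_pos.2 ht).ne'
        rw [hP_def]
        field_simp

theorem lintegral_Ioi_ofReal_div_sq {B T : ℝ} (hB : 0 ≤ B) (hT : 0 < T) :
    ∫⁻ t in Ioi T, ENNReal.ofReal (B / t ^ 2) = ENNReal.ofReal (B / T) := by
  have heq : EqOn (fun t => ENNReal.ofReal (B / t ^ 2))
      (fun t => ENNReal.ofReal (B * t ^ (-2 : ℝ))) (Ioi T) := fun t ht => by
    dsimp only
    rw [rpow_neg (hT.trans ht).le, rpow_two, div_eq_mul_inv]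
  have hint : IntegrableOn (fun t : ℝ => B * t ^ (-2 : ℝ)) (Ioi T) :=
    (integrableOn_Ioi_rpow_of_lt (by norm_num) hT).const_mul B
  rw [setLIntegral_congr_fun measurableSet_Ioi heq, ← ofReal_integral_eq_lintegral_ofReal hint
    ((ae_restrict_iff' measurableSet_Ioi).2 (ae_of_all _ fun t ht =>
      mul_nonneg hB (rpow_nonneg (hT.trans ht).le _))),
    integral_const_mul, integral_Ioi_rpow_of_lt (by norm_num) hT]
  norm_num [rpow_neg_one, div_eq_mul_inv]

theorem schrodinger_heat_longtime_estimate_general (n : ℕ) (C₀ c₀ : ℝ)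
    (hC₀ : 0 < C₀) (hc₀ : 0 < c₀) :
    ∃ C > 0, ∀ (γ : EuclideanSpace ℝ (Fin n) → ℝ)
      (K : ℝ → EuclideanSpace ℝ (Fin n) → EuclideanSpace ℝ (Fin n) → ℝ)
      (f : EuclideanSpace ℝ (Fin n) → ℝ) (M γk : ℝ)
      (x : EuclideanSpace ℝ (Fin n)),
      (∀ z, 0 < γ z) → 0 ≤ M → LocallyIntegrable f volume → IsBMOLWith γ f M →
      (∀ t, 0 < t → ∀ x' y : EuclideanSpace ℝ (Fin n),
        |K t x' y| ≤ C₀ * t ^ (-1 - (n : ℝ) / 2) * Real.exp (-c₀ * ‖x' - y‖ ^ 2 / t) *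
          (1 + t / (γ x') ^ 2)⁻¹ * (1 + ‖x' - y‖ / Real.sqrt t) ^ (-1 - (n : ℝ))) →
      0 < γk → γk / 2 ≤ γ x → γ x ≤ 2 * γk →
      ∫⁻ t in Ioi (γk ^ 2), ∫⁻ y, ENNReal.ofReal (|K t x y| * |f y|)
        ≤ ENNReal.ofReal (C * M) := by
  set κ := (volume (ball (0 : EuclideanSpace ℝ (Fin n)) 1)).toReal
  have hκ : 0 < κ :=
    ENNReal.toReal_pos (measure_ball_pos volume 0 one_pos).ne' measure_ball_lt_top.ne
  have hA := gaussianDyadicSum_pos n hc₀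
  refine ⟨4 * (C₀ * gaussianDyadicSum n c₀ * κ), by positivity, ?_⟩
  intro γ K f M γk x hγ hM hf hBMO hK hγk _ hγx
  have hT : 0 < γk ^ 2 := by positivity
  calc ∫⁻ t in Ioi (γk ^ 2), ∫⁻ y, ENNReal.ofReal (|K t x y| * |f y|)
      ≤ ∫⁻ t in Ioi (γk ^ 2),
          ENNReal.ofReal (γ x ^ 2 * (C₀ * gaussianDyadicSum n c₀ * κ * M) / t ^ 2) := by
        refine setLIntegral_mono' measurableSet_Ioi fun t ht => ?_
        have ht0 : 0 < t := hT.trans ht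
        have hγk_le : γk ≤ √t := (le_sqrt hγk.le ht0.le).2 (le_of_lt ht)
        exact hBMO.lintegral_abs_mul_abs_le hf hC₀.le hc₀ (hγ x) ht0 (by linarith) (hK t ht0 x)
    _ = ENNReal.ofReal (γ x ^ 2 * (C₀ * gaussianDyadicSum n c₀ * κ * M) / γk ^ 2) :=
        lintegral_Ioi_ofReal_div_sq (by positivity) hT
    _ ≤ ENNReal.ofReal (4 * (C₀ * gaussianDyadicSum n c₀ * κ) * M) := by
        refine ENNReal.ofReal_le_ofReal ((div_le_iff₀ hT).2 ?_)
        have hγsq : γ x ^ 2 ≤ 4 * γk ^ 2 := by nlinarith [hγ x]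
        calc γ x ^ 2 * (C₀ * gaussianDyadicSum n c₀ * κ * M)
            ≤ 4 * γk ^ 2 * (C₀ * gaussianDyadicSum n c₀ * κ * M) := by gcongr
          _ = _ := by ring

/-- let `V ∈ RH_q`, `q > n/2`, with critical radius function `γ`, and
suppose the time derivative `K t x y = ∂_t W^ℒ_t(x,y)` of the heat kernel of
`ℒ = -Δ + V` satisfies
`|K t x y| ≤ C₀ t^{-1-n/2} e^{-c₀|x-y|²/t} (1+t/γ(x)²)⁻¹ (1+|x-y|/√t)^{-1-n}`.
Then for `f ∈ BMO^ℒ(ℝⁿ)` with norm at most `M` and any `x` with `γ(x) ∼ γ(x_k)`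
(comparability within a factor `2`),
`Ω(f)(x) = ∫_{γ(x_k)²}^∞ ∫_{ℝⁿ} |∂_t W^ℒ_t(x,y)| |f(y)| dy dt ≤ C M`. -/
theorem schrodinger_heat_longtime_estimate (n : ℕ) (hn : 1 ≤ n) (C₀ c₀ : ℝ)
    (hC₀ : 0 < C₀) (hc₀ : 0 < c₀) :
    ∃ C > 0, ∀ (γ : EuclideanSpace ℝ (Fin n) → ℝ)
      (K : ℝ → EuclideanSpace ℝ (Fin n) → EuclideanSpace ℝ (Fin n) → ℝ)
      (f : EuclideanSpace ℝ (Fin n) → ℝ) (M γk : ℝ)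
      (x : EuclideanSpace ℝ (Fin n)),
      (∀ z, 0 < γ z) → 0 ≤ M → LocallyIntegrable f volume → IsBMOLWith γ f M →
      (∀ t, 0 < t → ∀ x' y : EuclideanSpace ℝ (Fin n),
        |K t x' y| ≤ C₀ * t ^ (-1 - (n : ℝ) / 2) * Real.exp (-c₀ * ‖x' - y‖ ^ 2 / t) *
          (1 + t / (γ x') ^ 2)⁻¹ * (1 + ‖x' - y‖ / Real.sqrt t) ^ (-1 - (n : ℝ))) →
      0 < γk → γk / 2 ≤ γ x → γ x ≤ 2 * γk →
      ∫⁻ t in Ioi (γk ^ 2), ∫⁻ y, ENNReal.ofReal (|K t x y| * |f y|)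
        ≤ ENNReal.ofReal (C * M) :=
  schrodinger_heat_longtime_estimate_general n C₀ c₀ hC₀ hc₀

end
end

section
/- Let ℒ = −Δ + V with V ∈ RH_q, q > n/2, and suppose the Riesz kernel bound |R^ℒ_ℓ(x,y)| ≤ C |x-y|^{-n} (1 + |x-y|/γ(x))^{-1} holds. Then for f ∈ BMO^ℒ(ℝⁿ), the tail integral T(f)(x) = ∫_{|x-y| > M γ(x)} |R^ℒ_ℓ(x,y)| |f(y)| dy satisfies T(f)(x) ≤ C_M ‖f‖_{BMO^ℒ(ℝⁿ)} for every fixed 0 < M < 1. -/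
/-!
Write `ρ = M γ(x)`. The kernel bound gives `|R(x,y)| ≤ C₀ γ(x) / |x-y|^{n+1}`, so on the dyadic
annulus `2^j ρ ≤ |x-y| < 2^{j+1} ρ` the kernel is at most `C₀ γ(x) / (2^j ρ)^{n+1}`. Since `M < 1`
that annulus lies in the ball `B(x, 2^{j+1} γ(x))`, whose radius is at least `γ(x)`, so the
`BMO^ℒ` norm bounds the integral of `|f|` over it by `|B(x, 2^{j+1} γ(x))| ‖f‖`. The product is
`C₀ |B(0,1)| 2^n M^{-(n+1)} ‖f‖ 2^{-j}`, and summing the geometric series over `j` gives the bound.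
-/

open MeasureTheory Set
open scoped ENNReal

noncomputable section

open Metric

def dyadicAnnulus {X : Type*} [PseudoMetricSpace X] (x : X) (ρ : ℝ) (j : ℕ) : Set X :=
  ball x (2 ^ (j + 1) * ρ) \ ball x (2 ^ j * ρ)

theorem compl_ball_subset_iUnion_dyadicAnnulus {X : Type*} [PseudoMetricSpace X] (x : X)
    {ρ : ℝ} (hρ : 0 < ρ) : (ball x ρ)ᶜ ⊆ ⋃ j, dyadicAnnulus x ρ j := by
  intro y hy
  rw [mem_compl_iff, mem_ball, not_lt] at hy
  obtain ⟨j, hj, hj'⟩ := exists_nat_pow_near ((one_le_div hρ).2 hy) one_lt_two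
  refine mem_iUnion.2 ⟨j, ?_, ?_⟩
  · rwa [mem_ball, ← div_lt_iff₀ hρ]
  · rwa [mem_ball, not_lt, ← le_div_iff₀ hρ]

theorem lintegral_compl_ball_le_tsum_dyadicAnnulus {X : Type*} [PseudoMetricSpace X]
    [MeasurableSpace X] (μ : Measure X) (F : X → ℝ≥0∞) (x : X) {ρ : ℝ} (hρ : 0 < ρ) :
    ∫⁻ y in (ball x ρ)ᶜ, F y ∂μ ≤ ∑' j, ∫⁻ y in dyadicAnnulus x ρ j, F y ∂μ :=
  (lintegral_mono_set (compl_ball_subset_iUnion_dyadicAnnulus x hρ)).trans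
    (lintegral_iUnion_le _ _)

theorem rpow_neg_mul_inv_one_add_div_le (n : ℕ) {d r g : ℝ} (hr : 0 < r) (hrd : r ≤ d)
    (hg : 0 < g) : d ^ (-(n : ℝ)) * (1 + d / g)⁻¹ ≤ g / r ^ (n + 1) := by
  have hd : 0 < d := hr.trans_le hrd
  have h_inv : (1 + d / g)⁻¹ ≤ g / d := by
    have := inv_anti₀ (by positivity : 0 < d / g) (le_add_of_nonneg_left zero_le_one)
    rwa [inv_div] at this
  calc d ^ (-(n : ℝ)) * (1 + d / g)⁻¹ ≤ (d ^ n)⁻¹ * (g / d) := by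
        rw [Real.rpow_neg hd.le, Real.rpow_natCast]
        gcongr
    _ = g / d ^ (n + 1) := by field_simp; ring
    _ ≤ g / r ^ (n + 1) := by gcongr

theorem EuclideanSpace.volume_ball_toReal {n : ℕ} (x : EuclideanSpace ℝ (Fin n)) {r : ℝ}
    (hr : 0 < r) : (volume (ball x r)).toReal =
      r ^ n * (volume (ball (0 : EuclideanSpace ℝ (Fin n)) 1)).toReal := by
  rw [Measure.addHaar_ball_of_pos volume x hr, ENNReal.toReal_mul,
    ENNReal.toReal_ofReal (by positivity), finrank_euclideanSpace_fin]

theorem IsBMOLWith.lintegral_abs_ball_le {n : ℕ} {γ f : EuclideanSpace ℝ (Fin n) → ℝ} {Mf : ℝ}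
    (hbmo : IsBMOLWith γ f Mf) (hf : LocallyIntegrable f volume) {z : EuclideanSpace ℝ (Fin n)}
    {r : ℝ} (hγr : γ z ≤ r) (hr : 0 < r) :
    ∫⁻ y in ball z r, ENNReal.ofReal |f y| ≤ ENNReal.ofReal ((volume (ball z r)).toReal * Mf) := by
  have hvol : 0 < (volume (ball z r)).toReal :=
    ENNReal.toReal_pos (measure_ball_pos volume z hr).ne' measure_ball_lt_top.ne
  have hint : IntegrableOn (fun y => |f y|) (ball z r) volume :=
    ((hf.integrableOn_isCompact (isCompact_closedBall z r)).mono_set ball_subset_closedBall).abs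
  rw [← ofReal_integral_eq_lintegral_ofReal hint (ae_of_all _ fun y => abs_nonneg _)]
  gcongr
  rw [← inv_mul_le_iff₀ hvol]
  exact hbmo.2 z r hγr

theorem lintegral_dyadicAnnulus_kernel_mul_abs_le {n : ℕ} {γ f : EuclideanSpace ℝ (Fin n) → ℝ}
    {R : EuclideanSpace ℝ (Fin n) → EuclideanSpace ℝ (Fin n) → ℝ} {C₀ M Mf : ℝ}
    {x : EuclideanSpace ℝ (Fin n)} (hC₀ : 0 ≤ C₀) (hM0 : 0 < M) (hM1 : M < 1) (hγx : 0 < γ x)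
    (hf : LocallyIntegrable f volume) (hbmo : IsBMOLWith γ f Mf)
    (hR : ∀ y, x ≠ y → |R x y| ≤ C₀ * ‖x - y‖ ^ (-(n : ℝ)) * (1 + ‖x - y‖ / γ x)⁻¹) (j : ℕ) :
    ∫⁻ y in dyadicAnnulus x (M * γ x) j, ENNReal.ofReal (|R x y| * |f y|) ≤
      ENNReal.ofReal (C₀ * (volume (ball (0 : EuclideanSpace ℝ (Fin n)) 1)).toReal * 2 ^ n /
        M ^ (n + 1) * Mf) * 2⁻¹ ^ j := by
  set c := (volume (ball (0 : EuclideanSpace ℝ (Fin n)) 1)).toReal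
  set r₀ := 2 ^ j * (M * γ x)
  set r := 2 ^ (j + 1) * γ x
  set K := C₀ * γ x / r₀ ^ (n + 1)
  have hr₀ : 0 < r₀ := by positivity
  have hK : 0 ≤ K := by positivity
  have h_subset : dyadicAnnulus x (M * γ x) j ⊆ ball x r :=
    sdiff_subset.trans <| ball_subset_ball <|
      mul_le_mul_of_nonneg_left (mul_le_of_le_one_left hγx.le hM1.le) (by positivity)
  have h_kernel : ∀ y ∈ dyadicAnnulus x (M * γ x) j, |R x y| ≤ K := by
    rintro y ⟨-, hy⟩
    rw [mem_ball, not_lt, dist_eq_norm, norm_sub_rev] at hy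
    have hxy : x ≠ y := by rw [← sub_ne_zero, ← norm_pos_iff]; exact hr₀.trans_le hy
    calc |R x y| ≤ C₀ * (‖x - y‖ ^ (-(n : ℝ)) * (1 + ‖x - y‖ / γ x)⁻¹) := by
          rw [← mul_assoc]; exact hR y hxy
      _ ≤ C₀ * (γ x / r₀ ^ (n + 1)) := by
          gcongr
          exact rpow_neg_mul_inv_one_add_div_le n hr₀ hy hγx
      _ = K := (mul_div_assoc _ _ _).symm
  calc ∫⁻ y in dyadicAnnulus x (M * γ x) j, ENNReal.ofReal (|R x y| * |f y|)
      ≤ ∫⁻ y in dyadicAnnulus x (M * γ x) j, ENNReal.ofReal K * ENNReal.ofReal |f y| := by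
        refine setLIntegral_mono' (measurableSet_ball.diff measurableSet_ball) fun y hy => ?_
        rw [← ENNReal.ofReal_mul hK]
        gcongr
        exact h_kernel y hy
    _ ≤ ENNReal.ofReal K * ∫⁻ y in ball x r, ENNReal.ofReal |f y| := by
        rw [lintegral_const_mul' _ _ ENNReal.ofReal_ne_top]
        gcongr
    _ ≤ ENNReal.ofReal K * ENNReal.ofReal (r ^ n * c * Mf) := by
        gcongr
        rw [← EuclideanSpace.volume_ball_toReal x (by positivity)]
        exact hbmo.lintegral_abs_ball_le hf (le_mul_of_one_le_left hγx.le (one_le_pow₀ one_le_two))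
          (by positivity)
    _ = ENNReal.ofReal (C₀ * c * 2 ^ n / M ^ (n + 1) * Mf) * 2⁻¹ ^ j := by
        rw [← ENNReal.ofReal_mul hK, ← ENNReal.ofReal_ofNat 2, ← ENNReal.ofReal_inv_of_pos two_pos,
          ← ENNReal.ofReal_pow (by norm_num), ← ENNReal.ofReal_mul' (by positivity)]
        congr 1
        simp only [K, r, r₀, inv_pow]
        field_simp
        ring

theorem schrodinger_riesz_tail_estimate_general (n : ℕ) (C₀ : ℝ) (hC₀ : 0 < C₀)
    (M : ℝ) (hM0 : 0 < M) (hM1 : M < 1) :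
    ∃ C > 0, ∀ (γ : EuclideanSpace ℝ (Fin n) → ℝ)
      (R : EuclideanSpace ℝ (Fin n) → EuclideanSpace ℝ (Fin n) → ℝ)
      (f : EuclideanSpace ℝ (Fin n) → ℝ) (Mf : ℝ)
      (x : EuclideanSpace ℝ (Fin n)),
      (∀ z, 0 < γ z) → 0 ≤ Mf → LocallyIntegrable f volume → IsBMOLWith γ f Mf →
      (∀ x' y : EuclideanSpace ℝ (Fin n), x' ≠ y →
        |R x' y| ≤ C₀ * ‖x' - y‖ ^ (-(n : ℝ)) * (1 + ‖x' - y‖ / γ x')⁻¹) →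
      ∫⁻ y in {y : EuclideanSpace ℝ (Fin n) | M * γ x < ‖x - y‖},
          ENNReal.ofReal (|R x y| * |f y|)
        ≤ ENNReal.ofReal (C * Mf) := by
  set c := (volume (ball (0 : EuclideanSpace ℝ (Fin n)) 1)).toReal
  have hc : 0 < c :=
    ENNReal.toReal_pos (measure_ball_pos volume _ one_pos).ne' measure_ball_lt_top.ne
  refine ⟨C₀ * c * 2 ^ n / M ^ (n + 1) * 2, by positivity, ?_⟩
  intro γ R f Mf x hγ _ hf hbmo hR
  have h_tail : {y | M * γ x < ‖x - y‖} ⊆ (ball x (M * γ x))ᶜ := fun y hy => by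
    rw [mem_compl_iff, mem_ball, not_lt, dist_eq_norm, norm_sub_rev]
    exact le_of_lt hy
  calc ∫⁻ y in {y | M * γ x < ‖x - y‖}, ENNReal.ofReal (|R x y| * |f y|)
      ≤ ∑' j, ∫⁻ y in dyadicAnnulus x (M * γ x) j, ENNReal.ofReal (|R x y| * |f y|) :=
        (lintegral_mono_set h_tail).trans
          (lintegral_compl_ball_le_tsum_dyadicAnnulus _ _ x (mul_pos hM0 (hγ x)))
    _ ≤ ∑' j, ENNReal.ofReal (C₀ * c * 2 ^ n / M ^ (n + 1) * Mf) * 2⁻¹ ^ j :=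
        ENNReal.tsum_le_tsum fun j => lintegral_dyadicAnnulus_kernel_mul_abs_le hC₀.le hM0 hM1
          (hγ x) hf hbmo (hR x) j
    _ = ENNReal.ofReal (C₀ * c * 2 ^ n / M ^ (n + 1) * 2 * Mf) := by
        rw [ENNReal.tsum_mul_left, ENNReal.tsum_geometric, ENNReal.one_sub_inv_two, inv_inv,
          mul_right_comm _ 2, ENNReal.ofReal_mul' zero_le_two, ENNReal.ofReal_ofNat]

/-- let `ℒ = -Δ + V`, `V ∈ RH_q` with `q > n/2` and critical radius `γ`,
and suppose the Riesz kernel bound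
`|R^ℒ_ℓ(x,y)| ≤ C₀ |x-y|^{-n} (1+|x-y|/γ(x))⁻¹` holds. Then for `f ∈ BMO^ℒ(ℝⁿ)` with
norm at most `Mf` and every fixed `0 < M < 1`, the tail integral satisfies
`∫_{|x-y| > M γ(x)} |R^ℒ_ℓ(x,y)| |f(y)| dy ≤ C_M Mf`. -/
theorem schrodinger_riesz_tail_estimate (n : ℕ) (hn : 1 ≤ n) (C₀ : ℝ) (hC₀ : 0 < C₀)
    (M : ℝ) (hM0 : 0 < M) (hM1 : M < 1) :
    ∃ C > 0, ∀ (γ : EuclideanSpace ℝ (Fin n) → ℝ)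
      (R : EuclideanSpace ℝ (Fin n) → EuclideanSpace ℝ (Fin n) → ℝ)
      (f : EuclideanSpace ℝ (Fin n) → ℝ) (Mf : ℝ)
      (x : EuclideanSpace ℝ (Fin n)),
      (∀ z, 0 < γ z) → 0 ≤ Mf → LocallyIntegrable f volume → IsBMOLWith γ f Mf →
      (∀ x' y : EuclideanSpace ℝ (Fin n), x' ≠ y →
        |R x' y| ≤ C₀ * ‖x' - y‖ ^ (-(n : ℝ)) * (1 + ‖x' - y‖ / γ x')⁻¹) →
      ∫⁻ y in {y : EuclideanSpace ℝ (Fin n) | M * γ x < ‖x - y‖},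
          ENNReal.ofReal (|R x y| * |f y|)
        ≤ ENNReal.ofReal (C * Mf) :=
  schrodinger_riesz_tail_estimate_general n C₀ hC₀ M hM0 hM1
end
end
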